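/- Fix 1 ≤ k ≤ n. The mixed-integer program: minimize k·t + Σ_{i ∈ Fin n} v i over x : Fin m → Bool, t ∈ ℝ, v : Fin n → ℝ, d : Fin n → ℝ, z : Fin n → Fin m → ℝ subject to v i ≥ d i − t for all i, d i ≥ Σ_{j} z i j for all i, z i j ≥ (x j)·(1 − p i j) + (p i j)·(1 − x j) for all i, j (booleans identified with 0/1 reals), t ≥ 0, and v i ≥ 0 for all i, has optimal value equal to z(k): its infimum over feasible points equals z(k) and is attained. -/

import Mathlib

/-!
The MIP is the linear-programming dual of "sum of the `k` largest values" applied to the Hamming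
distances `d_i(x)`, with `x` left free. For any threshold `t` and excesses `v_i ≥ max (d_i - t) 0`,
the `k` largest distances sum to at most `k t + Σ_i v_i`, so every feasible value is at least
`D_k(x) ≥ z(k)`. Conversely, for an optimal committee and a `k`-set `S` of largest distances,
the threshold `t = min_{i ∈ S} d_i` separates `S` from its complement, and then
`k t + Σ_i max (d_i - t) 0 = Σ_{i ∈ S} d_i = z(k)`.
-/

/-- Hamming distance of voter `i`'s profile to the committee `x`. -/
def dHam {n m : ℕ} (p : Fin n → Fin m → Bool) (x : Fin m → Bool) (i : Fin n) : ℕ :=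
  (Finset.univ.filter fun j => p i j ≠ x j).card

/-- `D_k(x)`: sum of the `k` largest Hamming distances of the voters to `x`. -/
def Dk {n m : ℕ} (p : Fin n → Fin m → Bool) (k : ℕ) (x : Fin m → Bool) : ℕ :=
  (Finset.powersetCard k (Finset.univ : Finset (Fin n))).sup
    (fun S => ∑ i ∈ S, dHam p x i)

/-- `z(k)`: the optimal value of the `k`-sum approval voting problem. -/
def zk {n m : ℕ} (p : Fin n → Fin m → Bool) (k : ℕ) : ℕ :=
  (Finset.univ : Finset (Fin m → Bool)).inf' Finset.univ_nonempty (Dk p k)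

/-- Boolean identified with a 0/1 real. -/
def bR (b : Bool) : ℝ := if b then 1 else 0

open Finset

section KSum

variable {ι : Type*}

theorem sum_le_card_mul_add_sum_of_sub_le [Fintype ι] (S : Finset ι) {f v : ι → ℝ} {t : ℝ}
    (hv : ∀ i, 0 ≤ v i) (hfv : ∀ i, f i - t ≤ v i) :
    ∑ i ∈ S, f i ≤ #S * t + ∑ i, v i :=
  calc ∑ i ∈ S, f i ≤ ∑ i ∈ S, (t + v i) := sum_le_sum fun i _ => by linarith [hfv i]
    _ = #S * t + ∑ i ∈ S, v i := by rw [sum_add_distrib, sum_const, nsmul_eq_mul]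
    _ ≤ #S * t + ∑ i, v i :=
      add_le_add_right (sum_le_sum_of_subset_of_nonneg (subset_univ S) fun i _ _ => hv i) _

theorem sum_eq_card_mul_add_sum_max_sub [Fintype ι] (S : Finset ι) {f : ι → ℝ} {t : ℝ}
    (hS : ∀ i ∈ S, t ≤ f i) (hSc : ∀ i ∉ S, f i ≤ t) :
    ∑ i ∈ S, f i = #S * t + ∑ i, max (f i - t) 0 := by
  have hmax : ∑ i, max (f i - t) 0 = ∑ i ∈ S, (f i - t) := by
    rw [← sum_subset (subset_univ S) fun i _ hi => max_eq_right (by linarith [hSc i hi])]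
    exact sum_congr rfl fun i hi => max_eq_left (by linarith [hS i hi])
  rw [hmax, sum_sub_distrib, sum_const, nsmul_eq_mul]
  ring

theorem le_of_mem_of_notMem_of_sum_le [DecidableEq ι] {f : ι → ℝ} {S : Finset ι}
    (hmax : ∀ T : Finset ι, #T = #S → ∑ i ∈ T, f i ≤ ∑ i ∈ S, f i)
    {i j : ι} (hi : i ∈ S) (hj : j ∉ S) : f j ≤ f i := by
  have hj' : j ∉ S.erase i := fun h => hj (mem_of_mem_erase h)
  have hcard : #(insert j (S.erase i)) = #S := by
    rw [card_insert_of_notMem hj', card_erase_add_one hi]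
  have hswap := hmax _ hcard
  rw [sum_insert hj', ← sum_erase_add S f hi] at hswap
  linarith

theorem exists_threshold_of_sum_le [DecidableEq ι] {f : ι → ℝ} {S : Finset ι}
    (hS : S.Nonempty) (hmax : ∀ T : Finset ι, #T = #S → ∑ i ∈ T, f i ≤ ∑ i ∈ S, f i) :
    ∃ i₀ ∈ S, (∀ i ∈ S, f i₀ ≤ f i) ∧ ∀ i ∉ S, f i ≤ f i₀ := by
  obtain ⟨i₀, hi₀, hmin⟩ := S.exists_min_image f hS
  exact ⟨i₀, hi₀, hmin, fun i hi => le_of_mem_of_notMem_of_sum_le hmax hi₀ hi⟩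

end KSum

section Approval

variable {n m : ℕ} (p : Fin n → Fin m → Bool)

theorem bR_mul_one_sub_add_bR_mul_one_sub (a b : Bool) :
    bR a * (1 - bR b) + bR b * (1 - bR a) = if b ≠ a then 1 else 0 := by
  cases a <;> cases b <;> norm_num [bR]

theorem dHam_eq_sum_ite (x : Fin m → Bool) (i : Fin n) :
    (dHam p x i : ℝ) = ∑ j, if p i j ≠ x j then 1 else 0 := by
  rw [dHam, sum_boole]

theorem dHam_le_sum {x : Fin m → Bool} {i : Fin n} {z : Fin m → ℝ}
    (hz : ∀ j, bR (x j) * (1 - bR (p i j)) + bR (p i j) * (1 - bR (x j)) ≤ z j) :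
    (dHam p x i : ℝ) ≤ ∑ j, z j := by
  rw [dHam_eq_sum_ite]
  exact sum_le_sum fun j _ => bR_mul_one_sub_add_bR_mul_one_sub (x j) (p i j) ▸ hz j

theorem sum_dHam_le_Dk {k : ℕ} (x : Fin m → Bool) {T : Finset (Fin n)} (hT : #T = k) :
    ∑ i ∈ T, (dHam p x i : ℝ) ≤ Dk p k x := by
  rw [← Nat.cast_sum, Nat.cast_le]
  exact le_sup (f := fun S => ∑ i ∈ S, dHam p x i) (mem_powersetCard.mpr ⟨subset_univ T, hT⟩)

theorem exists_card_eq_Dk_eq_sum {k : ℕ} (hkn : k ≤ n) (x : Fin m → Bool) :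
    ∃ S : Finset (Fin n), #S = k ∧ (Dk p k x : ℝ) = ∑ i ∈ S, (dHam p x i : ℝ) := by
  have hne : (powersetCard k (univ : Finset (Fin n))).Nonempty := by
    rwa [powersetCard_nonempty, card_univ, Fintype.card_fin]
  obtain ⟨S, hS, hDk⟩ := exists_mem_eq_sup _ hne fun S => ∑ i ∈ S, dHam p x i
  exact ⟨S, (mem_powersetCard.mp hS).2, by rw [Dk, hDk, Nat.cast_sum]⟩

theorem zk_le_Dk (k : ℕ) (x : Fin m → Bool) : zk p k ≤ Dk p k x :=
  inf'_le _ (mem_univ x)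

theorem exists_zk_eq_Dk (k : ℕ) : ∃ x, zk p k = Dk p k x := by
  obtain ⟨x, -, hx⟩ := exists_mem_eq_inf' univ_nonempty (Dk p k)
  exact ⟨x, hx⟩

end Approval

/-- The `k`-centrum MIP (minimize `k·t + Σ_i v_i` s.t.
`v_i ≥ d_i − t`, `d_i ≥ Σ_j z_{ij}`, `z_{ij} ≥ x_j(1 − p_{ij}) + p_{ij}(1 − x_j)`,
`t ≥ 0`, `v_i ≥ 0`) has optimal value `z(k)`, attained. -/
theorem mip_kcentrum_value {n m k : ℕ} (hk1 : 1 ≤ k) (hkn : k ≤ n)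
    (p : Fin n → Fin m → Bool) :
    IsLeast {c : ℝ | ∃ (x : Fin m → Bool) (t : ℝ) (v : Fin n → ℝ)
        (d : Fin n → ℝ) (z : Fin n → Fin m → ℝ),
        (∀ i : Fin n, d i - t ≤ v i) ∧
        (∀ i : Fin n, ∑ j : Fin m, z i j ≤ d i) ∧
        (∀ (i : Fin n) (j : Fin m),
          bR (x j) * (1 - bR (p i j)) + bR (p i j) * (1 - bR (x j)) ≤ z i j) ∧
        0 ≤ t ∧ (∀ i : Fin n, 0 ≤ v i) ∧
        c = k * t + ∑ i : Fin n, v i}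
      ((zk p k : ℕ) : ℝ) := by
  constructor
  · obtain ⟨x, hx⟩ := exists_zk_eq_Dk p k
    obtain ⟨S, hSk, hDk⟩ := exists_card_eq_Dk_eq_sum p hkn x
    have hmax : ∀ T : Finset (Fin n), #T = #S →
        ∑ i ∈ T, (dHam p x i : ℝ) ≤ ∑ i ∈ S, (dHam p x i : ℝ) :=
      fun T hT => hDk ▸ sum_dHam_le_Dk p x (hT.trans hSk)
    obtain ⟨i₀, hi₀, hS, hSc⟩ :=
      exists_threshold_of_sum_le (card_pos.mp (by omega)) hmax
    refine ⟨x, dHam p x i₀, fun i => max ((dHam p x i : ℝ) - dHam p x i₀) 0,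
      fun i => dHam p x i, fun i j => if p i j ≠ x j then 1 else 0,
      fun i => le_max_left _ _, fun i => (dHam_eq_sum_ite p x i).ge,
      fun i j => (bR_mul_one_sub_add_bR_mul_one_sub (x j) (p i j)).le, by positivity,
      fun i => le_max_right _ _, ?_⟩
    rw [hx, hDk, sum_eq_card_mul_add_sum_max_sub S hS hSc, hSk]
  · rintro c ⟨x, t, v, d, z, hv, hd, hz, -, hv0, rfl⟩
    obtain ⟨S, hSk, hDk⟩ := exists_card_eq_Dk_eq_sum p hkn x
    have hdist : ∀ i, (dHam p x i : ℝ) - t ≤ v i := fun i => by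
      linarith [dHam_le_sum p (hz i), hd i, hv i]
    calc ((zk p k : ℕ) : ℝ) ≤ Dk p k x := Nat.cast_le.mpr (zk_le_Dk p k x)
      _ = ∑ i ∈ S, (dHam p x i : ℝ) := hDk
      _ ≤ k * t + ∑ i, v i := hSk ▸ sum_le_card_mul_add_sum_of_sub_le S hv0 hdist
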